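/- arXiv:1210.0206 — 7 statements merged into one kernel-verified Lean document; each statement's English description precedes it below -/
import Mathlib

section
/- Let v₁,…,v_{n+1} be vectors in ℝ^n generating a full-dimensional pointed polyhedral cone, so that up to scalar there is a unique nontrivial linear dependency 0 = Σ α_i v_i. Then the cone is non-decomposable if and only if α_i ≠ 0 for all i. -/
open Matrix

noncomputable section

variable {n p : ℕ}

/-- The polyhedral cone generated by the vectors `v i`. -/
def coneOf (v : Fin p → (Fin n → ℝ)) : Set (Fin n → ℝ) :=
  {x | ∃ c : Fin p → ℝ, (∀ i, 0 ≤ c i) ∧ x = ∑ i, c i • v i}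

/-- The cone contains no nontrivial linear subspace. -/
def IsPointedCone (v : Fin p → (Fin n → ℝ)) : Prop :=
  ∀ x ∈ coneOf v, -x ∈ coneOf v → x = 0

/-- The generators span the ambient space. -/
def FullDim (v : Fin p → (Fin n → ℝ)) : Prop :=
  Submodule.span ℝ (Set.range v) = ⊤

/-- `v i` generates an extreme ray of the cone. -/
def IsExtremeRayGen (v : Fin p → (Fin n → ℝ)) (i : Fin p) : Prop :=
  v i ≠ 0 ∧ ∀ x ∈ coneOf v, ∀ y ∈ coneOf v, x + y = v i → ∃ a : ℝ, 0 ≤ a ∧ x = a • v i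

/-- `v` is a family of generators of the pairwise distinct extreme rays of a
full-dimensional pointed polyhedral cone. -/
def GoodCone (v : Fin p → (Fin n → ℝ)) : Prop :=
  FullDim v ∧ IsPointedCone v ∧ (∀ i, IsExtremeRayGen v i) ∧
    ∀ i j, i ≠ j → ∀ c : ℝ, 0 < c → v i ≠ c • v j

/-- The cone is decomposable: the space splits as a direct sum with every
generator lying in one of the two factors. -/
def Decomposable (v : Fin p → (Fin n → ℝ)) : Prop :=
  ∃ V₁ V₂ : Submodule ℝ (Fin n → ℝ), V₁ ≠ ⊥ ∧ V₂ ≠ ⊥ ∧ IsCompl V₁ V₂ ∧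
    ∀ i, v i ∈ V₁ ∨ v i ∈ V₂

/-- The component of the cone inside the subspace `W` is decomposable. -/
def DecomposableWithin (W : Submodule ℝ (Fin n → ℝ)) (v : Fin p → (Fin n → ℝ)) : Prop :=
  ∃ W₁ W₂ : Submodule ℝ (Fin n → ℝ), W₁ ≠ ⊥ ∧ W₂ ≠ ⊥ ∧ W₁ ⊔ W₂ = W ∧ W₁ ⊓ W₂ = ⊥ ∧
    ∀ i, v i ∈ W → (v i ∈ W₁ ∨ v i ∈ W₂)

/-- Projective equivalence of two cones given by generators: an invertible
linear map sends the extreme rays of one bijectively onto those of the other. -/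
def ProjEquiv (v w : Fin p → (Fin n → ℝ)) : Prop :=
  ∃ A : (Fin n → ℝ) ≃ₗ[ℝ] (Fin n → ℝ), ∃ σ : Equiv.Perm (Fin p), ∃ lam : Fin p → ℝ,
    (∀ i, 0 < lam i) ∧ ∀ i, A (v i) = lam i • w (σ i)

/-- `A ∈ GL(C)`: an invertible matrix mapping the cone onto itself. -/
def PreservesCone (A : Matrix (Fin n) (Fin n) ℝ) (v : Fin p → (Fin n → ℝ)) : Prop :=
  IsUnit A.det ∧ (fun x => A *ᵥ x) '' coneOf v = coneOf v

/-- `A` maps the ray `ℝ₊ v i` onto the ray `ℝ₊ v (σ i)` for every `i`. -/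
def MapsRays (A : Matrix (Fin n) (Fin n) ℝ) (v : Fin p → (Fin n → ℝ))
    (σ : Equiv.Perm (Fin p)) : Prop :=
  ∀ i, ∃ c : ℝ, 0 < c ∧ A *ᵥ v i = c • v (σ i)

/-- `σ ∈ Proj(C)`: the permutation of extreme rays is induced by some `A ∈ GL(C)`. -/
def ProjSym (v : Fin p → (Fin n → ℝ)) (σ : Equiv.Perm (Fin p)) : Prop :=
  ∃ A : Matrix (Fin n) (Fin n) ℝ, PreservesCone A v ∧ MapsRays A v σ

/-- `F` is a face of the cone: intersection with a supporting hyperplane. -/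
def IsFace (v : Fin p → (Fin n → ℝ)) (F : Set (Fin n → ℝ)) : Prop :=
  ∃ a : Fin n → ℝ, (∀ x ∈ coneOf v, 0 ≤ a ⬝ᵥ x) ∧ F = {x ∈ coneOf v | a ⬝ᵥ x = 0}

/-- The extreme-ray index sets of the `k`-dimensional faces. -/
def faceIdxSets (v : Fin p → (Fin n → ℝ)) (k : ℕ) : Set (Set (Fin p)) :=
  {S | ∃ F : Set (Fin n → ℝ), IsFace v F ∧
    Module.finrank ℝ (Submodule.span ℝ F) = k ∧ S = {i | v i ∈ F}}

/-- `σ` preserves the family of (ray index sets of) `k`-dimensional faces. -/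
def PreservesFaces (v : Fin p → (Fin n → ℝ)) (σ : Equiv.Perm (Fin p)) (k : ℕ) : Prop :=
  ∀ S ∈ faceIdxSets v k, (⇑σ) '' S ∈ faceIdxSets v k

/-- `σ ∈ Skel_k(C)`: preserves all faces of dimension at most `k`. -/
def SkelMem (v : Fin p → (Fin n → ℝ)) (k : ℕ) (σ : Equiv.Perm (Fin p)) : Prop :=
  ∀ l, l ≤ k → PreservesFaces v σ l

/-- `σ ∈ Comb(C)`: preserves the faces of all dimensions `0 ≤ k ≤ n-1`. -/
def CombMem (v : Fin p → (Fin n → ℝ)) (σ : Equiv.Perm (Fin p)) : Prop :=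
  ∀ l, l ≤ n - 1 → PreservesFaces v σ l

/-- `σ ∈ Lin_v(C)`: realized exactly on generators by an invertible matrix. -/
def LinMem (v : Fin p → (Fin n → ℝ)) (σ : Equiv.Perm (Fin p)) : Prop :=
  ∃ A : Matrix (Fin n) (Fin n) ℝ, IsUnit A.det ∧ ∀ i, A *ᵥ v i = v (σ i)

/-!
Every dependency is a multiple of `α`, so it vanishes wherever `α` does. If `α j = 0`, split the
generators into those with `α i ≠ 0` and the rest: a vector in both spans yields a dependency
which, vanishing on the second group, shows the vector is `0`; so the two spans decompose the
space. Conversely, in a decomposition `V₁ ⊕ V₂` the part of `α` on the generators lying in `V₁`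
is again a dependency, hence `c • α`; if `α` has no zero entry, generators in `V₁` force `c = 1`
and generators outside `V₁` force `c = 0`.
-/

namespace Submodule

variable {ι K V : Type*} [Ring K] [AddCommGroup V] [Module K V] {v : ι → V}

theorem exists_fun_of_mem_span_image [Fintype ι] {s : Set ι} {x : V}
    (hx : x ∈ span K (v '' s)) :
    ∃ c : ι → K, (∀ i ∉ s, c i = 0) ∧ ∑ i, c i • v i = x := by
  obtain ⟨l, hl, rfl⟩ := Finsupp.mem_span_image_iff_linearCombination K |>.mp hx
  exact ⟨l, fun i hi => Finsupp.notMem_support_iff.mp fun h => hi (hl h),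
    by rw [Finsupp.linearCombination_apply, Finsupp.sum_fintype _ _ (by simp)]⟩

theorem exists_notMem_of_span_range_eq_top (hv : span K (Set.range v) = ⊤)
    {W : Submodule K V} (hW : W ≠ ⊤) : ∃ i, v i ∉ W := by
  by_contra! h
  exact hW (top_unique (hv ▸ span_le.mpr (Set.range_subset_iff.mpr h)))

theorem sum_indicator_smul_eq_zero_of_disjoint [Fintype ι] {V₁ V₂ : Submodule K V}
    (hV : Disjoint V₁ V₂) {s : Set ι} (h₁ : ∀ i ∈ s, v i ∈ V₁) (h₂ : ∀ i ∉ s, v i ∈ V₂) {β : ι → K}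
    (hβ : ∑ i, β i • v i = 0) : ∑ i, s.indicator β i • v i = 0 := by
  classical
  have hsplit : ∑ i, s.indicator β i • v i + ∑ i, sᶜ.indicator β i • v i = 0 := by
    rw [← Finset.sum_add_distrib, ← hβ]
    simp only [← add_smul, Set.indicator_self_add_compl_apply]
  have hmem₁ : ∑ i, s.indicator β i • v i ∈ V₁ := sum_mem fun i _ => by
    by_cases hi : i ∈ s
    · exact smul_mem _ _ (h₁ i hi)
    · simp [hi]
  have hmem₂ : ∑ i, sᶜ.indicator β i • v i ∈ V₂ := sum_mem fun i _ => by
    by_cases hi : i ∈ s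
    · simp [hi]
    · exact smul_mem _ _ (h₂ i hi)
  refine disjoint_def.mp hV _ hmem₁ ?_
  rw [eq_neg_of_add_eq_zero_left hsplit]
  exact neg_mem hmem₂

end Submodule

section UniqueDependency

open Submodule

variable {ι K V : Type*} [Fintype ι] [Ring K] [AddCommGroup V] [Module K V] {v : ι → V}
  {α : ι → K}

theorem disjoint_span_image_compl_of_unique_dependency
    (huniq : ∀ β : ι → K, ∑ i, β i • v i = 0 → ∃ c : K, β = c • α)
    {s : Set ι} (hs : ∀ i ∉ s, α i = 0) : Disjoint (span K (v '' s)) (span K (v '' sᶜ)) := by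
  refine disjoint_def.mpr fun x hx₁ hx₂ => ?_
  obtain ⟨a, ha, rfl⟩ := exists_fun_of_mem_span_image hx₁
  obtain ⟨b, hb, hab⟩ := exists_fun_of_mem_span_image hx₂
  obtain ⟨c, hc⟩ := huniq (a - b) (by simp only [Pi.sub_apply, sub_smul,
    Finset.sum_sub_distrib, hab, sub_self])
  have hb_zero : b = 0 := funext fun i => by
    by_cases hi : i ∈ s
    · exact hb i (Set.notMem_compl_iff.mpr hi)
    · simpa [ha i hi, hs i hi] using congr_fun hc i
  rw [← hab, hb_zero]
  simp

theorem exists_isCompl_of_unique_dependency_of_eq_zero (hv : span K (Set.range v) = ⊤)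
    (hv₀ : ∀ i, v i ≠ 0) (hα : α ≠ 0)
    (huniq : ∀ β : ι → K, ∑ i, β i • v i = 0 → ∃ c : K, β = c • α) {j : ι} (hj : α j = 0) :
    ∃ V₁ V₂ : Submodule K V, V₁ ≠ ⊥ ∧ V₂ ≠ ⊥ ∧ IsCompl V₁ V₂ ∧ ∀ i, v i ∈ V₁ ∨ v i ∈ V₂ := by
  set s : Set ι := {i | α i ≠ 0}
  obtain ⟨i₀, hi₀⟩ := Function.ne_iff.mp hα
  have hsup : span K (v '' s) ⊔ span K (v '' sᶜ) = ⊤ := by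
    rw [← span_union, ← Set.image_union, Set.union_compl_self, Set.image_univ, hv]
  refine ⟨span K (v '' s), span K (v '' sᶜ),
    (Submodule.ne_bot_iff _).mpr ⟨v i₀, subset_span ⟨i₀, hi₀, rfl⟩, hv₀ i₀⟩,
    (Submodule.ne_bot_iff _).mpr ⟨v j, subset_span ⟨j, not_not.mpr hj, rfl⟩, hv₀ j⟩,
    ⟨disjoint_span_image_compl_of_unique_dependency huniq fun i hi => not_not.mp hi,
      codisjoint_iff.mpr hsup⟩, fun i => ?_⟩
  by_cases hi : i ∈ s
  · exact .inl (subset_span ⟨i, hi, rfl⟩)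
  · exact .inr (subset_span ⟨i, hi, rfl⟩)

theorem exists_eq_zero_of_isCompl_of_unique_dependency [NoZeroDivisors K]
    (hv : span K (Set.range v) = ⊤) (hdep : ∑ i, α i • v i = 0)
    (huniq : ∀ β : ι → K, ∑ i, β i • v i = 0 → ∃ c : K, β = c • α)
    {V₁ V₂ : Submodule K V} (h₁ : V₁ ≠ ⊥) (h₂ : V₂ ≠ ⊥) (hV : IsCompl V₁ V₂)
    (hmem : ∀ i, v i ∈ V₁ ∨ v i ∈ V₂) : ∃ i, α i = 0 := by
  set s : Set ι := {i | v i ∈ V₁}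
  obtain ⟨c, hc⟩ := huniq _ <| sum_indicator_smul_eq_zero_of_disjoint hV.disjoint
    (s := s) (fun _ hi => hi) (fun i hi => (hmem i).resolve_left hi) hdep
  obtain ⟨i₁, hi₁⟩ :=
    exists_notMem_of_span_range_eq_top hv fun h => h₁ (eq_bot_of_isCompl_top (h ▸ hV))
  obtain ⟨i₂, hi₂⟩ :=
    exists_notMem_of_span_range_eq_top hv fun h => h₂ (eq_bot_of_top_isCompl (h ▸ hV))
  have hi₁s : i₁ ∈ s := (hmem i₁).resolve_right hi₁
  have hi₂s : i₂ ∉ s := hi₂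
  have hc₁ := congr_fun hc i₁
  have hc₂ := congr_fun hc i₂
  rw [Pi.smul_apply, smul_eq_mul, Set.indicator_of_mem hi₁s] at hc₁
  rw [Pi.smul_apply, smul_eq_mul, Set.indicator_of_notMem hi₂s] at hc₂
  by_contra! hall
  have hc₀ : c = 0 := (mul_eq_zero.mp hc₂.symm).resolve_right (hall i₂)
  exact hall i₁ (by rwa [hc₀, zero_mul] at hc₁)

end UniqueDependency

/-- With the unique (up to scalar) dependency 0 = ∑ αᵢ vᵢ among the
n+1 generators, the cone is non-decomposable iff all αᵢ ≠ 0. -/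
theorem stmt_2 (n : ℕ) (v : Fin (n + 1) → (Fin n → ℝ)) (hv : GoodCone v)
    (α : Fin (n + 1) → ℝ) (hdep : ∑ i, α i • v i = 0) (hα : α ≠ 0)
    (huniq : ∀ β : Fin (n + 1) → ℝ, ∑ i, β i • v i = 0 → ∃ c : ℝ, β = c • α) :
    ¬ Decomposable v ↔ ∀ i, α i ≠ 0 := by
  obtain ⟨hfull, -, hray, -⟩ := hv
  have hdec : Decomposable v ↔ ∃ i, α i = 0 :=
    ⟨fun ⟨_, _, h₁, h₂, hV, hmem⟩ =>
      exists_eq_zero_of_isCompl_of_unique_dependency hfull hdep huniq h₁ h₂ hV hmem,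
    fun ⟨_, hj⟩ =>
      exists_isCompl_of_unique_dependency_of_eq_zero hfull (fun i => (hray i).1) hα huniq hj⟩
  simpa only [not_exists] using hdec.not
end
end

section
/- Let v₁,…,v_p span ℝ^n and Q = Σ v_i v_iᵀ. If a permutation σ of {1,…,p} satisfies v_iᵀ Q⁻¹ v_j = v_{σ(i)}ᵀ Q⁻¹ v_{σ(j)} for all i, j, then there exists A ∈ GL_n(ℝ) with A v_i = v_{σ(i)} for all i. -/
open Matrix

noncomputable section

variable {n p : ℕ}

/-
The frame operator `Q = ∑ vᵢ vᵢᵀ` of a spanning family is invertible (positive definite) and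
reproduces every vector as `x = ∑ (vᵢ ⬝ Q⁻¹ x) vᵢ`. Hence `A := ∑ v_{σ i} (vᵢᵀ Q⁻¹)` satisfies
`A vⱼ = ∑ (vᵢ ⬝ Q⁻¹ vⱼ) v_{σ i} = ∑ (v_{σ i} ⬝ Q⁻¹ v_{σ j}) v_{σ i} = v_{σ j}`, the middle step
being the invariance of the colours; `A` is invertible because its image contains the spanning
family `v ∘ σ`.
-/

namespace Matrix

variable {ι m R : Type*} [Fintype m]

theorem sum_vecMulVec_mulVec [Fintype ι] [CommSemiring R] (w u : ι → m → R) (x : m → R) :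
    (∑ i, vecMulVec (w i) (u i)) *ᵥ x = ∑ i, (u i ⬝ᵥ x) • w i := by
  simp [sum_mulVec, vecMulVec_mulVec]

theorem eq_zero_of_dotProduct_eq_zero_of_span_eq_top [Fintype ι] [CommSemiring R]
    {v : ι → m → R} (hspan : Submodule.span R (Set.range v) = ⊤) {x : m → R}
    (h : ∀ i, v i ⬝ᵥ x = 0) : x = 0 := by
  refine dotProduct_eq_zero x fun y => dotProduct_comm x y ▸ ?_
  obtain ⟨c, rfl⟩ := (Submodule.mem_span_range_iff_exists_fun R).1
    (hspan.symm ▸ Submodule.mem_top : y ∈ Submodule.span R (Set.range v))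
  simp [sum_dotProduct, h]

theorem isUnit_det_sum_vecMulVec_self [Fintype ι] [DecidableEq m]
    [Field R] [LinearOrder R] [IsStrictOrderedRing R] {v : ι → m → R}
    (hspan : Submodule.span R (Set.range v) = ⊤) : IsUnit (∑ i, vecMulVec (v i) (v i)).det := by
  refine isUnit_iff_ne_zero.2 fun hdet => ?_
  obtain ⟨x, hx, hQx⟩ := exists_mulVec_eq_zero_iff.2 hdet
  have hsq : ∑ i, (v i ⬝ᵥ x) ^ 2 = 0 := by
    simpa [sum_vecMulVec_mulVec, sum_dotProduct, sq] using congrArg (· ⬝ᵥ x) hQx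
  have horth : ∀ i, v i ⬝ᵥ x = 0 := fun i =>
    pow_eq_zero_iff two_ne_zero |>.1 <|
      (Finset.sum_eq_zero_iff_of_nonneg fun i _ => sq_nonneg _).1 hsq i (Finset.mem_univ i)
  exact hx (eq_zero_of_dotProduct_eq_zero_of_span_eq_top hspan horth)

theorem sum_dotProduct_inv_sum_vecMulVec_self_mulVec_smul [Fintype ι] [DecidableEq m]
    [CommRing R] {v : ι → m → R} (hQ : IsUnit (∑ i, vecMulVec (v i) (v i)).det) (x : m → R) :
    ∑ i, (v i ⬝ᵥ ((∑ i, vecMulVec (v i) (v i))⁻¹ *ᵥ x)) • v i = x := by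
  rw [← sum_vecMulVec_mulVec, mulVec_mulVec, mul_nonsing_inv _ hQ, one_mulVec]

theorem isUnit_det_of_mulVec_eq [DecidableEq m] [CommRing R] {A : Matrix m m R}
    {v w : ι → m → R} (hspan : Submodule.span R (Set.range w) = ⊤) (h : ∀ i, A *ᵥ v i = w i) :
    IsUnit A.det := by
  rw [← isUnit_iff_isUnit_det, ← mulVec_surjective_iff_isUnit]
  have hrange : LinearMap.range A.mulVecLin = ⊤ := eq_top_iff.2 <| hspan ▸
    Submodule.span_le.2 (Set.range_subset_iff.2 fun i => ⟨v i, h i⟩)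
  exact LinearMap.range_eq_top.1 hrange

end Matrix

/-- If the colors vᵢᵀ Q⁻¹ vⱼ are σ-invariant, then σ is realized by
an invertible matrix A with A vᵢ = v_{σ(i)}. -/
theorem stmt_7 (n p : ℕ) (v : Fin p → (Fin n → ℝ))
    (hspan : Submodule.span ℝ (Set.range v) = ⊤)
    (Q : Matrix (Fin n) (Fin n) ℝ) (hQ : Q = ∑ i, vecMulVec (v i) (v i))
    (σ : Equiv.Perm (Fin p))
    (hcol : ∀ i j, v i ⬝ᵥ (Q⁻¹ *ᵥ v j) = v (σ i) ⬝ᵥ (Q⁻¹ *ᵥ v (σ j))) :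
    ∃ A : Matrix (Fin n) (Fin n) ℝ, IsUnit A.det ∧ ∀ i, A *ᵥ v i = v (σ i) := by
  set A := ∑ i, vecMulVec (v (σ i)) (v i ᵥ* Q⁻¹)
  have hA : ∀ j, A *ᵥ v j = v (σ j) := fun j =>
    calc A *ᵥ v j = ∑ i, (v (σ i) ⬝ᵥ (Q⁻¹ *ᵥ v (σ j))) • v (σ i) := by
          rw [sum_vecMulVec_mulVec]
          exact Finset.sum_congr rfl fun i _ => by rw [← dotProduct_mulVec, hcol]
      _ = ∑ i, (v i ⬝ᵥ (Q⁻¹ *ᵥ v (σ j))) • v i :=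
          Equiv.sum_comp σ fun i => (v i ⬝ᵥ (Q⁻¹ *ᵥ v (σ j))) • v i
      _ = v (σ j) := by
          subst hQ
          exact sum_dotProduct_inv_sum_vecMulVec_self_mulVec_smul
            (isUnit_det_sum_vecMulVec_self hspan) _
  have hspanσ : Submodule.span ℝ (Set.range (v ∘ σ)) = ⊤ := by
    rwa [EquivLike.range_comp]
  exact ⟨A, isUnit_det_of_mulVec_eq hspanσ hA, hA⟩
end
end

section
/- Let C be a pointed full-dimensional polyhedral cone in ℝ^n with extreme rays R₁,…,R_p. There exists a unique decomposition ℝ^n = ⨁_{k=1}^h V_k into subspaces such that every extreme ray lies in some V_k, and the cone generated by the extreme rays lying in V_k is non-decomposable for each k. -/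
/-!
Call a splitting `W = A ⊕ B` admissible (`IsSplitting`) if every generator lying in `W` lies in
`A` or in `B`. A subspace spanned by the generators it contains passes this property on to both
summands of an admissible splitting, so splitting repeatedly (which terminates by artinianity)
produces a decomposition into indecomposable pieces. For uniqueness, an indecomposable piece `U`
of one decomposition meets some piece `U'` of another in a nonzero generator, and intersecting the
admissible splitting `U' ⊕ (⨆ of the other pieces)` with `U` shows `U ≤ U'`; by symmetry and
independence, the two decompositions coincide.
-/

open Matrix

noncomputable section

variable {n p : ℕ}

open Submodule Set

theorem sSupIndep.union {α : Type*} [CompleteLattice α] [IsModularLattice α] {s t : Set α}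
    (hs : sSupIndep s) (ht : sSupIndep t) (hst : Disjoint (sSup s) (sSup t)) :
    sSupIndep (s ∪ t) := by
  suffices key : ∀ {s t : Set α}, sSupIndep s → Disjoint (sSup s) (sSup t) →
      ∀ x ∈ s, Disjoint x (sSup ((s ∪ t) \ {x})) by
    rintro x (hx | hx)
    · exact key hs hst x hx
    · rw [union_comm]
      exact key ht hst.symm x hx
  intro s t hs hst x hx
  have hx' : Disjoint x (sSup (s \ {x}) ⊔ sSup t) :=
    (hs hx).disjoint_sup_right_of_disjoint_sup_left
      (hst.mono_left (sup_le (le_sSup hx) (sSup_le_sSup sdiff_subset)))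
  refine hx'.mono_right ?_
  rw [← sSup_union]
  exact sSup_le_sSup fun y ⟨hy, hne⟩ => hy.imp (fun hy => ⟨hy, hne⟩) id

theorem sSupIndep.eq_of_le {α : Type*} [CompleteLattice α] {s : Set α} {x y : α}
    (hs : sSupIndep s) (hx : x ∈ s) (hy : y ∈ s) (hx0 : x ≠ ⊥) (hxy : x ≤ y) : x = y := by
  by_contra hne
  exact hx0 ((hs.pairwiseDisjoint hx hy hne).eq_bot_of_le hxy)

section Decomposition

variable {R M ι : Type*} [Ring R] [AddCommGroup M] [Module R M] {v : ι → M}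
  {W A B U : Submodule R M} {𝒮 𝒯 : Set (Submodule R M)}

structure IsSplitting (v : ι → M) (W A B : Submodule R M) : Prop where
  sup_eq : A ⊔ B = W
  inf_eq : A ⊓ B = ⊥
  mem_or_mem : ∀ i, v i ∈ W → v i ∈ A ∨ v i ∈ B

def IsIndecomposable (v : ι → M) (W : Submodule R M) : Prop :=
  ∀ A B, IsSplitting v W A B → A = ⊥ ∨ B = ⊥

structure IsDecomposition (v : ι → M) (W : Submodule R M) (𝒮 : Set (Submodule R M)) :
    Prop where
  finite : 𝒮.Finite
  bot_notMem : ⊥ ∉ 𝒮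
  indep : sSupIndep 𝒮
  sSup_eq : sSup 𝒮 = W
  exists_mem : ∀ i, v i ∈ W → ∃ U ∈ 𝒮, v i ∈ U

lemma le_sup_of_span_inter_range_eq (hW : span R ((W : Set M) ∩ range v) = W)
    (h : ∀ i, v i ∈ W → v i ∈ A ∨ v i ∈ B) : W ≤ A ⊔ B := by
  refine hW.ge.trans (span_le.2 ?_)
  rintro _ ⟨hx, i, rfl⟩
  exact (h i hx).elim (fun hA => mem_sup_left hA) (fun hB => mem_sup_right hB)

namespace IsSplitting

lemma symm (h : IsSplitting v W A B) : IsSplitting v W B A where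
  sup_eq := by rw [sup_comm, h.sup_eq]
  inf_eq := by rw [inf_comm, h.inf_eq]
  mem_or_mem i hi := (h.mem_or_mem i hi).symm

lemma left_lt (h : IsSplitting v W A B) (hB : B ≠ ⊥) : A < W := by
  refine lt_of_le_of_ne (h.sup_eq ▸ le_sup_left) fun hAW => hB ?_
  rw [← h.inf_eq, eq_comm, inf_eq_right, hAW, ← h.sup_eq]
  exact le_sup_right

lemma span_inter_range_left (h : IsSplitting v W A B)
    (hW : span R ((W : Set M) ∩ range v) = W) : span R ((A : Set M) ∩ range v) = A := by
  set S := span R ((A : Set M) ∩ range v)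
  have hSA : S ≤ A := span_le.2 inter_subset_left
  have hWS : W ≤ S ⊔ B := le_sup_of_span_inter_range_eq hW fun i hi =>
    (h.mem_or_mem i hi).imp_left fun hA => subset_span ⟨hA, i, rfl⟩
  refine hSA.antisymm ?_
  calc A ≤ (S ⊔ B) ⊓ A := le_inf ((h.sup_eq ▸ le_sup_left).trans hWS) le_rfl
    _ = S ⊔ B ⊓ A := sup_inf_assoc_of_le B hSA
    _ = S := by rw [inf_comm, h.inf_eq, sup_bot_eq]

lemma inf_left_inf_right {W₀ : Submodule R M} (h : IsSplitting v W₀ A B) (hle : W ≤ W₀)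
    (hW : span R ((W : Set M) ∩ range v) = W) : IsSplitting v W (W ⊓ A) (W ⊓ B) where
  sup_eq := (sup_le inf_le_left inf_le_left).antisymm <| le_sup_of_span_inter_range_eq hW
    fun i hi => (h.mem_or_mem i (hle hi)).imp (fun hA => ⟨hi, hA⟩) (fun hB => ⟨hi, hB⟩)
  inf_eq := eq_bot_iff.2 (h.inf_eq ▸ inf_le_inf inf_le_right inf_le_right)
  mem_or_mem i hi := (h.mem_or_mem i (hle hi)).imp (fun hA => ⟨hi, hA⟩) (fun hB => ⟨hi, hB⟩)

end IsSplitting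

namespace IsDecomposition

lemma isSplitting (h : IsDecomposition v W 𝒮) (hU : U ∈ 𝒮) :
    IsSplitting v W U (sSup (𝒮 \ {U})) where
  sup_eq := by rw [← sSup_insert, insert_sdiff_singleton, insert_eq_of_mem hU, h.sSup_eq]
  inf_eq := disjoint_iff.1 (h.indep hU)
  mem_or_mem i hi := by
    obtain ⟨U', hU', hiU'⟩ := h.exists_mem i hi
    by_cases hUU' : U' = U
    · exact .inl (hUU' ▸ hiU')
    · exact .inr (le_sSup (mem_sdiff_singleton.2 ⟨hU', hUU'⟩) hiU')

lemma span_inter_range (h : IsDecomposition v W 𝒮) (hW : span R ((W : Set M) ∩ range v) = W)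
    (hU : U ∈ 𝒮) : span R ((U : Set M) ∩ range v) = U :=
  (h.isSplitting hU).span_inter_range_left hW

lemma union (h𝒮 : IsDecomposition v A 𝒮) (h𝒯 : IsDecomposition v B 𝒯)
    (h : IsSplitting v W A B) : IsDecomposition v W (𝒮 ∪ 𝒯) where
  finite := h𝒮.finite.union h𝒯.finite
  bot_notMem hbot := hbot.elim h𝒮.bot_notMem h𝒯.bot_notMem
  indep := h𝒮.indep.union h𝒯.indep <| by
    rw [h𝒮.sSup_eq, h𝒯.sSup_eq]
    exact disjoint_iff.2 h.inf_eq
  sSup_eq := by rw [sSup_union, h𝒮.sSup_eq, h𝒯.sSup_eq, h.sup_eq]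
  exists_mem i hi := (h.mem_or_mem i hi).elim
    (fun hA => (h𝒮.exists_mem i hA).imp fun _ hU => ⟨.inl hU.1, hU.2⟩)
    (fun hB => (h𝒯.exists_mem i hB).imp fun _ hU => ⟨.inr hU.1, hU.2⟩)

end IsDecomposition

lemma IsIndecomposable.exists_le (hU : IsIndecomposable v U) (hU0 : U ≠ ⊥)
    (hUspan : span R ((U : Set M) ∩ range v) = U) (hle : U ≤ W) (h : IsDecomposition v W 𝒮) :
    ∃ U' ∈ 𝒮, U ≤ U' := by
  obtain ⟨_, ⟨hiU, i, rfl⟩, hi0⟩ : ∃ x ∈ (U : Set M) ∩ range v, x ≠ 0 := by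
    by_contra! h0
    exact hU0 (hUspan ▸ span_eq_bot.2 h0)
  obtain ⟨U', hU', hiU'⟩ := h.exists_mem i (hle hiU)
  have hs := (h.isSplitting hU').inf_left_inf_right hle hUspan
  refine ⟨U', hU', ?_⟩
  rcases hU _ _ hs with h0 | h0
  · have hi : v i ∈ U ⊓ U' := mem_inf.2 ⟨hiU, hiU'⟩
    rw [h0, mem_bot] at hi
    exact (hi0 hi).elim
  · have hsup := hs.sup_eq
    rw [h0, sup_bot_eq] at hsup
    exact inf_eq_left.1 hsup

lemma IsDecomposition.subset_of_isIndecomposable (hW : span R ((W : Set M) ∩ range v) = W)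
    (h𝒮 : IsDecomposition v W 𝒮) (h𝒯 : IsDecomposition v W 𝒯)
    (h𝒮i : ∀ U ∈ 𝒮, IsIndecomposable v U) (h𝒯i : ∀ U ∈ 𝒯, IsIndecomposable v U) :
    𝒮 ⊆ 𝒯 := by
  have refines : ∀ {𝒮 𝒯}, IsDecomposition v W 𝒮 → IsDecomposition v W 𝒯 →
      (∀ U ∈ 𝒮, IsIndecomposable v U) → ∀ U ∈ 𝒮, ∃ U' ∈ 𝒯, U ≤ U' :=
    fun h𝒮 h𝒯 h𝒮i U hU =>
      (h𝒮i U hU).exists_le (ne_of_mem_of_not_mem hU h𝒮.bot_notMem) (h𝒮.span_inter_range hW hU)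
        (h𝒮.sSup_eq ▸ le_sSup hU) h𝒯
  intro U hU
  obtain ⟨U', hU', hUU'⟩ := refines h𝒮 h𝒯 h𝒮i U hU
  obtain ⟨U'', hU'', hU'U''⟩ := refines h𝒯 h𝒮 h𝒯i U' hU'
  have hUU'' : U = U'' :=
    h𝒮.indep.eq_of_le hU hU'' (ne_of_mem_of_not_mem hU h𝒮.bot_notMem) (hUU'.trans hU'U'')
  rwa [hUU'.antisymm (hUU'' ▸ hU'U'')]

theorem exists_isDecomposition_isIndecomposable [IsArtinian R M] (hv : ∀ i, v i ≠ 0)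
    (W : Submodule R M) (hW : span R ((W : Set M) ∩ range v) = W) :
    ∃ 𝒮, IsDecomposition v W 𝒮 ∧ ∀ U ∈ 𝒮, IsIndecomposable v U := by
  induction W using WellFoundedLT.induction with
  | _ W ih =>
  by_cases hW0 : W = ⊥
  · subst hW0
    exact ⟨∅, ⟨finite_empty, notMem_empty _, sSupIndep_empty, sSup_empty,
      fun i hi => (hv i ((mem_bot R).1 hi)).elim⟩, by simp⟩
  by_cases hWi : IsIndecomposable v W
  · exact ⟨{W}, ⟨finite_singleton W, Ne.symm hW0, sSupIndep_singleton W, sSup_singleton,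
      fun i hi => ⟨W, rfl, hi⟩⟩, by simpa using hWi⟩
  obtain ⟨A, B, hs, hA, hB⟩ : ∃ A B, IsSplitting v W A B ∧ A ≠ ⊥ ∧ B ≠ ⊥ := by
    simpa [IsIndecomposable] using hWi
  obtain ⟨𝒮, h𝒮, h𝒮i⟩ := ih A (hs.left_lt hB) (hs.span_inter_range_left hW)
  obtain ⟨𝒯, h𝒯, h𝒯i⟩ := ih B (hs.symm.left_lt hA) (hs.symm.span_inter_range_left hW)
  exact ⟨𝒮 ∪ 𝒯, h𝒮.union h𝒯 hs, fun U hU => hU.elim (h𝒮i U) (h𝒯i U)⟩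

theorem existsUnique_isDecomposition_isIndecomposable [IsArtinian R M] (hv : ∀ i, v i ≠ 0)
    (hW : span R ((W : Set M) ∩ range v) = W) :
    ∃! 𝒮, IsDecomposition v W 𝒮 ∧ ∀ U ∈ 𝒮, IsIndecomposable v U := by
  obtain ⟨𝒮, h𝒮, h𝒮i⟩ := exists_isDecomposition_isIndecomposable hv W hW
  exact ⟨𝒮, ⟨h𝒮, h𝒮i⟩, fun 𝒯 ⟨h𝒯, h𝒯i⟩ =>
    (h𝒯.subset_of_isIndecomposable hW h𝒮 h𝒯i h𝒮i).antisymm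
      (h𝒮.subset_of_isIndecomposable hW h𝒯 h𝒮i h𝒯i)⟩

lemma isDecomposition_top_iff :
    IsDecomposition v ⊤ 𝒮 ↔
      𝒮.Finite ∧ ⊥ ∉ 𝒮 ∧ sSupIndep 𝒮 ∧ sSup 𝒮 = ⊤ ∧ ∀ i, ∃ U ∈ 𝒮, v i ∈ U :=
  ⟨fun h => ⟨h.finite, h.bot_notMem, h.indep, h.sSup_eq, fun i => h.exists_mem i mem_top⟩,
    fun ⟨hf, hb, hi, hs, he⟩ => ⟨hf, hb, hi, hs, fun i _ => he i⟩⟩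

end Decomposition

lemma not_decomposableWithin_iff {v : Fin p → Fin n → ℝ} {W : Submodule ℝ (Fin n → ℝ)} :
    ¬ DecomposableWithin W v ↔ IsIndecomposable v W := by
  constructor
  · intro h A B hs
    by_contra! hAB
    exact h ⟨A, B, hAB.1, hAB.2, hs.sup_eq, hs.inf_eq, hs.mem_or_mem⟩
  · rintro h ⟨A, B, hA, hB, hsup, hinf, hmem⟩
    exact (h A B ⟨hsup, hinf, hmem⟩).elim hA hB

/-- Unique decomposition of ℝⁿ into subspaces such that every extreme
ray lies in one of them and each component cone is non-decomposable. -/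
theorem stmt_9 (n p : ℕ) (v : Fin p → (Fin n → ℝ)) (hv : GoodCone v) :
    ∃! 𝒱 : Set (Submodule ℝ (Fin n → ℝ)), 𝒱.Finite ∧ ⊥ ∉ 𝒱 ∧
      sSupIndep 𝒱 ∧ sSup 𝒱 = ⊤ ∧ (∀ i, ∃ W ∈ 𝒱, v i ∈ W) ∧
      ∀ W ∈ 𝒱, ¬ DecomposableWithin W v := by
  have hspan : span ℝ (((⊤ : Submodule ℝ (Fin n → ℝ)) : Set (Fin n → ℝ)) ∩ range v) = ⊤ := by
    rw [top_coe, univ_inter]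
    exact hv.1
  simpa only [isDecomposition_top_iff, not_decomposableWithin_iff, and_assoc] using
    existsUnique_isDecomposition_isIndecomposable (fun i => (hv.2.2.1 i).1) hspan
end
end

section
/- Let C be a non-decomposable pointed full-dimensional polyhedral cone in ℝ^n with extreme rays R₁,…,R_p. If A ∈ GL_n(ℝ) satisfies A C = C and A R_i = R_i for every i (i.e., A induces the identity permutation on extreme rays), then A = λ I_n for some λ > 0. -/
open Matrix

noncomputable section

variable {n p : ℕ}

/-!
Each generator `v i` is an eigenvector of `A`, with eigenvalue `c i`. For any `α`, the generators
with eigenvalue `α` and the remaining ones span independent subspaces (they lie in distinct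
eigenspaces) which together are the whole space; were two eigenvalues different, this would split
the cone. So `A` acts as one scalar on a spanning family.
-/

open Submodule

section Eigenvectors

variable {K M ι : Type*} [Field K] [AddCommGroup M] [Module K M]

theorem isCompl_span_eigenvectors_eq_ne {f : Module.End K M} {v : ι → M} {c : ι → K}
    (hspan : span K (Set.range v) = ⊤) (hf : ∀ i, f (v i) = c i • v i) (α : K) :
    IsCompl (span K (v '' {i | c i = α})) (span K (v '' {i | c i ≠ α})) := by
  have hmem : ∀ i, v i ∈ f.eigenspace (c i) := fun i => Module.End.mem_eigenspace_iff.2 (hf i)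
  have hle₁ : span K (v '' {i | c i = α}) ≤ f.eigenspace α := by
    rw [span_le]
    rintro _ ⟨i, rfl, rfl⟩
    exact hmem i
  have hle₂ : span K (v '' {i | c i ≠ α}) ≤ ⨆ (β : K) (_ : β ≠ α), f.eigenspace β := by
    rw [span_le]
    rintro _ ⟨i, hi, rfl⟩
    exact mem_iSup_of_mem (c i) (mem_iSup_of_mem hi (hmem i))
  refine ⟨(f.eigenspaces_iSupIndep α).mono hle₁ hle₂, codisjoint_iff.2 ?_⟩
  rw [eq_top_iff, ← hspan, span_le]
  rintro _ ⟨i, rfl⟩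
  by_cases hi : c i = α
  · exact mem_sup_left (subset_span ⟨i, hi, rfl⟩)
  · exact mem_sup_right (subset_span ⟨i, hi, rfl⟩)

end Eigenvectors

theorem Matrix.eq_smul_one_of_mulVec_eq_smul {R m ι : Type*} [CommRing R] [Fintype m]
    [DecidableEq m] {A : Matrix m m R} {v : ι → m → R} (hspan : span R (Set.range v) = ⊤)
    {lam : R} (hA : ∀ i, A *ᵥ v i = lam • v i) : A = lam • 1 := by
  apply Matrix.toLin'.injective
  rw [map_smul, Matrix.toLin'_one]
  exact LinearMap.ext_on_range hspan fun i => by simp [hA]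

theorem decomposable_of_mulVec_eq_smul_of_ne {v : Fin p → Fin n → ℝ}
    (hfull : FullDim v) (hv : ∀ i, v i ≠ 0) {A : Matrix (Fin n) (Fin n) ℝ} {c : Fin p → ℝ}
    (hA : ∀ i, A *ᵥ v i = c i • v i) {i j : Fin p} (hij : c i ≠ c j) : Decomposable v := by
  have hcompl := isCompl_span_eigenvectors_eq_ne (f := A.mulVecLin) hfull hA (c i)
  refine ⟨_, _, ?_, ?_, hcompl, fun k => ?_⟩
  · exact (Submodule.ne_bot_iff _).2 ⟨v i, subset_span ⟨i, rfl, rfl⟩, hv i⟩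
  · exact (Submodule.ne_bot_iff _).2 ⟨v j, subset_span ⟨j, hij.symm, rfl⟩, hv j⟩
  · by_cases hk : c k = c i
    · exact Or.inl (subset_span ⟨k, hk, rfl⟩)
    · exact Or.inr (subset_span ⟨k, hk, rfl⟩)

theorem stmt_10_general (n p : ℕ) (v : Fin p → (Fin n → ℝ)) (hv : GoodCone v)
    (hnd : ¬ Decomposable v) (A : Matrix (Fin n) (Fin n) ℝ)
    (hrays : ∀ i, ∃ c : ℝ, 0 < c ∧ A *ᵥ v i = c • v i) :
    ∃ lam : ℝ, 0 < lam ∧ A = lam • (1 : Matrix (Fin n) (Fin n) ℝ) := by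
  obtain ⟨hfull, -, hextreme, -⟩ := hv
  choose c hc hAc using hrays
  have hconst : ∀ i j, c i = c j := fun i j => by_contra fun hij =>
    hnd (decomposable_of_mulVec_eq_smul_of_ne hfull (fun k => (hextreme k).1) hAc hij)
  obtain ⟨lam, hlam, hc_eq⟩ : ∃ lam, 0 < lam ∧ ∀ i, c i = lam := by
    rcases isEmpty_or_nonempty (Fin p) with hp | ⟨⟨i₀⟩⟩
    · exact ⟨1, one_pos, isEmptyElim⟩
    · exact ⟨c i₀, hc i₀, fun i => hconst i i₀⟩
  exact ⟨lam, hlam, Matrix.eq_smul_one_of_mulVec_eq_smul hfull fun i => hc_eq i ▸ hAc i⟩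

/-- For a non-decomposable cone, an element of GL(C) fixing every
extreme ray is a positive multiple of the identity. -/
theorem stmt_10 (n p : ℕ) (v : Fin p → (Fin n → ℝ)) (hv : GoodCone v)
    (hnd : ¬ Decomposable v) (A : Matrix (Fin n) (Fin n) ℝ)
    (hA : PreservesCone A v)
    (hrays : ∀ i, ∃ c : ℝ, 0 < c ∧ A *ᵥ v i = c • v i) :
    ∃ lam : ℝ, 0 < lam ∧ A = lam • (1 : Matrix (Fin n) (Fin n) ℝ) :=
  stmt_10_general n p v hv hnd A hrays
end
end

section
/- Let C be a non-decomposable pointed full-dimensional polyhedral cone in ℝ^n with extreme rays R₁,…,R_p. Then there exist generators v_i with R_i = ℝ_{≥0} v_i such that every σ ∈ Proj(C) is realized by a matrix A ∈ GL(C) of finite order satisfying A v_i = v_{σ(i)} exactly (with multiplier 1); i.e., Lin_v(C) = Proj(C) for this choice of v. -/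
open Matrix

noncomputable section

variable {n p : ℕ}

/-! A matrix realizing a projective symmetry is unique up to a positive scalar (eigenvectors
spanning a non-decomposable cone share one eigenvalue), so fixing `|det| = 1` selects a
canonical representative, and these representatives form a homomorphism `N` from `Proj(C)`,
a finite group, to `GL(C)`; in particular each `N σ` has finite order. Averaging the generators
over the group, `w i = ∑ ρ, N ρ (v (ρ⁻¹ i))`, gives positive multiples of `v i` on which every
`N σ` acts exactly by `σ`. -/

section ConeSymmetries

variable {v : Fin p → (Fin n → ℝ)} {A B : Matrix (Fin n) (Fin n) ℝ} {σ τ : Equiv.Perm (Fin p)}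

theorem smul_mem_coneOf {x : Fin n → ℝ} (hx : x ∈ coneOf v) {s : ℝ} (hs : 0 ≤ s) :
    s • x ∈ coneOf v := by
  obtain ⟨c, hc, rfl⟩ := hx
  exact ⟨fun i => s * c i, fun i => mul_nonneg hs (hc i), by simp only [Finset.smul_sum, smul_smul]⟩

theorem image_smul_coneOf {s : ℝ} (hs : 0 < s) : (fun x => s • x) '' coneOf v = coneOf v := by
  refine Set.Subset.antisymm (Set.image_subset_iff.2 fun x hx => smul_mem_coneOf hx hs.le)
    fun x hx => ⟨s⁻¹ • x, smul_mem_coneOf hx (inv_nonneg.2 hs.le), ?_⟩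
  simp only [smul_smul, mul_inv_cancel₀ hs.ne', one_smul]

theorem PreservesCone.one : PreservesCone (1 : Matrix (Fin n) (Fin n) ℝ) v :=
  ⟨by simp, by simp⟩

theorem PreservesCone.mul (hA : PreservesCone A v) (hB : PreservesCone B v) :
    PreservesCone (A * B) v := by
  refine ⟨by rw [det_mul]; exact hA.1.mul hB.1, ?_⟩
  simp_rw [← mulVec_mulVec]
  rw [← Set.image_image (fun x => A *ᵥ x), hB.2, hA.2]

theorem PreservesCone.inv (hA : PreservesCone A v) : PreservesCone A⁻¹ v := by
  refine ⟨isUnit_nonsing_inv_det A hA.1, ?_⟩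
  conv_lhs => rw [← hA.2, Set.image_image]
  simp [mulVec_mulVec, nonsing_inv_mul A hA.1]

theorem PreservesCone.smul (hA : PreservesCone A v) {s : ℝ} (hs : 0 < s) :
    PreservesCone (s • A) v := by
  refine ⟨by rw [det_smul]; exact ((isUnit_iff_ne_zero.2 hs.ne').pow _).mul hA.1, ?_⟩
  simp_rw [smul_mulVec]
  rw [← Set.image_image (fun x => s • x), hA.2, image_smul_coneOf hs]

theorem MapsRays.one : MapsRays (1 : Matrix (Fin n) (Fin n) ℝ) v 1 :=
  fun i => ⟨1, one_pos, by simp⟩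

theorem MapsRays.mul (hA : MapsRays A v σ) (hB : MapsRays B v τ) :
    MapsRays (A * B) v (σ * τ) := by
  intro i
  obtain ⟨c, hc, hBi⟩ := hB i
  obtain ⟨c', hc', hAi⟩ := hA (τ i)
  refine ⟨c' * c, mul_pos hc' hc, ?_⟩
  rw [← mulVec_mulVec, hBi, mulVec_smul, hAi, smul_smul, mul_comm, Equiv.Perm.mul_apply]

theorem MapsRays.inv (hA : MapsRays A v σ) (hdet : IsUnit A.det) : MapsRays A⁻¹ v σ⁻¹ := by
  intro j
  obtain ⟨c, hc, hAj⟩ := hA (σ⁻¹ j)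
  rw [show σ (σ⁻¹ j) = j from σ.apply_symm_apply j] at hAj
  refine ⟨c⁻¹, inv_pos.2 hc, ?_⟩
  have h := congrArg (A⁻¹ *ᵥ ·) hAj
  simp only [mulVec_mulVec, nonsing_inv_mul A hdet, one_mulVec, mulVec_smul] at h
  rw [h, smul_smul, inv_mul_cancel₀ hc.ne', one_smul]

theorem MapsRays.smul (hA : MapsRays A v σ) {s : ℝ} (hs : 0 < s) : MapsRays (s • A) v σ := by
  intro i
  obtain ⟨c, hc, hAi⟩ := hA i
  exact ⟨s * c, mul_pos hs hc, by rw [smul_mulVec, hAi, smul_smul]⟩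

variable (v) in
def projSymSubgroup : Subgroup (Equiv.Perm (Fin p)) where
  carrier := {σ | ProjSym v σ}
  mul_mem' := by
    rintro σ τ ⟨A, hA, hAσ⟩ ⟨B, hB, hBτ⟩
    exact ⟨A * B, hA.mul hB, hAσ.mul hBτ⟩
  one_mem' := ⟨1, PreservesCone.one, MapsRays.one⟩
  inv_mem' := by
    rintro σ ⟨A, hA, hAσ⟩
    exact ⟨A⁻¹, hA.inv, hAσ.inv hA.1⟩

end ConeSymmetries

section Rigidity

variable {v : Fin p → (Fin n → ℝ)}

theorem eigenvalue_eq_of_not_decomposable (hfull : FullDim v) (hne : ∀ i, v i ≠ 0)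
    (hnd : ¬ Decomposable v) {f : Module.End ℝ (Fin n → ℝ)} {d : Fin p → ℝ}
    (hf : ∀ i, f (v i) = d i • v i) (i j : Fin p) : d i = d j := by
  by_contra hij
  have hmem : ∀ k, v k ∈ f.eigenspace (d k) := fun k => Module.End.mem_eigenspace_iff.2 (hf k)
  set W := Submodule.span ℝ (v '' {k | d k ≠ d i})
  have hvW : ∀ k, d k ≠ d i → v k ∈ W := fun k hk => Submodule.subset_span ⟨k, hk, rfl⟩
  have hsplit : ∀ k, v k ∈ f.eigenspace (d i) ∨ v k ∈ W := fun k => by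
    by_cases hk : d k = d i
    · exact .inl (hk ▸ hmem k)
    · exact .inr (hvW k hk)
  refine hnd ⟨f.eigenspace (d i), W, ?_, ?_, ⟨?_, ?_⟩, hsplit⟩
  · exact (Submodule.ne_bot_iff _).2 ⟨v i, hmem i, hne i⟩
  · exact (Submodule.ne_bot_iff _).2 ⟨v j, hvW j (Ne.symm hij), hne j⟩
  · refine (f.eigenspaces_iSupIndep (d i)).mono_right ?_
    rw [Submodule.span_le]
    rintro _ ⟨k, hk, rfl⟩
    exact Submodule.mem_iSup_of_mem (d k) (Submodule.mem_iSup_of_mem hk (hmem k))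
  · rw [codisjoint_iff, eq_top_iff, ← hfull, Submodule.span_le]
    rintro _ ⟨k, rfl⟩
    exact (hsplit k).elim (Submodule.mem_sup_left ·) (Submodule.mem_sup_right ·)

theorem exists_pos_eq_smul_one_of_mapsRays_one (hfull : FullDim v) (hne : ∀ i, v i ≠ 0)
    (hnd : ¬ Decomposable v) {B : Matrix (Fin n) (Fin n) ℝ}
    (hB : MapsRays B v 1) : ∃ t : ℝ, 0 < t ∧ B = t • 1 := by
  choose d hd hBd using hB
  obtain ⟨t, ht, hdt⟩ : ∃ t : ℝ, 0 < t ∧ ∀ i, d i = t := by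
    rcases isEmpty_or_nonempty (Fin p) with _ | ⟨⟨i₀⟩⟩
    · exact ⟨1, one_pos, isEmptyElim⟩
    · exact ⟨d i₀, hd i₀, fun i =>
        eigenvalue_eq_of_not_decomposable hfull hne hnd (f := B.mulVecLin) hBd i i₀⟩
  refine ⟨t, ht, toLin'.injective ?_⟩
  rw [map_smul, toLin'_one]
  exact LinearMap.ext_on_range hfull fun i => by simp [hBd, hdt]

theorem MapsRays.exists_pos_eq_smul (hfull : FullDim v) (hne : ∀ i, v i ≠ 0)
    (hnd : ¬ Decomposable v) {A A' : Matrix (Fin n) (Fin n) ℝ} {σ : Equiv.Perm (Fin p)}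
    (hA : MapsRays A v σ) (hdet : IsUnit A.det) (hA' : MapsRays A' v σ) :
    ∃ t : ℝ, 0 < t ∧ A' = t • A := by
  have h := (hA.inv hdet).mul hA'
  rw [inv_mul_cancel] at h
  obtain ⟨t, ht, hB⟩ := exists_pos_eq_smul_one_of_mapsRays_one hfull hne hnd h
  refine ⟨t, ht, ?_⟩
  calc A' = A * (A⁻¹ * A') := by rw [← Matrix.mul_assoc, mul_nonsing_inv A hdet, Matrix.one_mul]
    _ = t • A := by rw [hB, Matrix.mul_smul, Matrix.mul_one]

end Rigidity

section CanonicalRepresentative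

variable {v : Fin p → (Fin n → ℝ)} {σ : Equiv.Perm (Fin p)}

-- For `n = 0` the exponent is `-0⁻¹ = 0`, harmlessly: every `0 × 0` matrix has determinant `1`.
def detNormalize (A : Matrix (Fin n) (Fin n) ℝ) : Matrix (Fin n) (Fin n) ℝ :=
  (|A.det| ^ (-(n : ℝ)⁻¹)) • A

theorem abs_det_detNormalize {A : Matrix (Fin n) (Fin n) ℝ} (hA : A.det ≠ 0) :
    |(detNormalize A).det| = 1 := by
  rcases Nat.eq_zero_or_pos n with rfl | hn
  · simp
  have habs : 0 < |A.det| := abs_pos.2 hA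
  rw [detNormalize, det_smul, abs_mul, abs_pow, abs_of_pos (Real.rpow_pos_of_pos habs _),
    Fintype.card_fin, ← Real.rpow_natCast, ← Real.rpow_mul habs.le, neg_mul,
    inv_mul_cancel₀ (by positivity), Real.rpow_neg_one, inv_mul_cancel₀ habs.ne']

open Classical in
def projRep (v : Fin p → (Fin n → ℝ)) (σ : Equiv.Perm (Fin p)) : Matrix (Fin n) (Fin n) ℝ :=
  if h : ProjSym v σ then detNormalize h.choose else 1

theorem projRep_spec (h : ProjSym v σ) :
    PreservesCone (projRep v σ) v ∧ MapsRays (projRep v σ) v σ ∧ |(projRep v σ).det| = 1 := by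
  obtain ⟨hC, hR⟩ := h.choose_spec
  have hs : 0 < |h.choose.det| ^ (-(n : ℝ)⁻¹) :=
    Real.rpow_pos_of_pos (abs_pos.2 hC.1.ne_zero) _
  rw [projRep, dif_pos h]
  exact ⟨hC.smul hs, hR.smul hs, abs_det_detNormalize hC.1.ne_zero⟩

theorem eq_projRep (hfull : FullDim v) (hne : ∀ i, v i ≠ 0) (hnd : ¬ Decomposable v)
    (h : ProjSym v σ) {M : Matrix (Fin n) (Fin n) ℝ} (hM : MapsRays M v σ) (hdet : |M.det| = 1) :
    M = projRep v σ := by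
  obtain ⟨hC, hR, habs⟩ := projRep_spec h
  obtain ⟨t, ht, rfl⟩ := hR.exists_pos_eq_smul hfull hne hnd hC.1 hM
  rw [det_smul, abs_mul, habs, mul_one, abs_pow, abs_of_pos ht, Fintype.card_fin] at hdet
  rcases Nat.eq_zero_or_pos n with rfl | hn
  · exact Subsingleton.elim _ _
  · rw [(pow_eq_one_iff_of_nonneg ht.le hn.ne').1 hdet, one_smul]

def projRepHom (hfull : FullDim v) (hne : ∀ i, v i ≠ 0) (hnd : ¬ Decomposable v) :
    projSymSubgroup v →* Matrix (Fin n) (Fin n) ℝ where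
  toFun σ := projRep v σ
  map_one' := (eq_projRep hfull hne hnd (projSymSubgroup v).one_mem MapsRays.one (by simp)).symm
  map_mul' σ τ := by
    obtain ⟨-, hσ, hσdet⟩ := projRep_spec σ.2
    obtain ⟨-, hτ, hτdet⟩ := projRep_spec τ.2
    refine (eq_projRep hfull hne hnd (σ * τ).2 (hσ.mul hτ) ?_).symm
    rw [det_mul, abs_mul, hσdet, hτdet, mul_one]

end CanonicalRepresentative

section Averaging

variable {G : Type*} [Group G] [Fintype G] (π : G →* Equiv.Perm (Fin p))
  (N : G →* Matrix (Fin n) (Fin n) ℝ) (v : Fin p → (Fin n → ℝ))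

def averagedGenerators (i : Fin p) : Fin n → ℝ :=
  ∑ g, N g *ᵥ v ((π g)⁻¹ i)

theorem mulVec_averagedGenerators (g : G) (i : Fin p) :
    N g *ᵥ averagedGenerators π N v i = averagedGenerators π N v (π g i) := by
  rw [averagedGenerators, mulVec_sum]
  refine Fintype.sum_equiv (Equiv.mulLeft g) _ _ fun h => ?_
  simp only [Equiv.coe_mulLeft, map_mul, mulVec_mulVec, _root_.mul_inv_rev, Equiv.Perm.mul_apply]
  rw [show (π g)⁻¹ (π g i) = i from (π g).symm_apply_apply i]

variable {π N v} in
theorem averagedGenerators_eq_smul (hN : ∀ g, MapsRays (N g) v (π g)) (i : Fin p) :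
    ∃ c : ℝ, 0 < c ∧ averagedGenerators π N v i = c • v i := by
  choose c hc hcv using hN
  refine ⟨∑ g, c g ((π g)⁻¹ i), Finset.sum_pos (fun g _ => hc _ _) Finset.univ_nonempty, ?_⟩
  rw [averagedGenerators, Finset.sum_smul]
  refine Finset.sum_congr rfl fun g _ => ?_
  rw [hcv, show π g ((π g)⁻¹ i) = i from (π g).apply_symm_apply i]

end Averaging

theorem MapsRays.of_mulVec_eq {v w : Fin p → (Fin n → ℝ)}
    (hw : ∀ i, ∃ c : ℝ, 0 < c ∧ w i = c • v i) {A : Matrix (Fin n) (Fin n) ℝ}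
    {σ : Equiv.Perm (Fin p)} (hA : ∀ i, A *ᵥ w i = w (σ i)) : MapsRays A v σ := by
  intro i
  obtain ⟨c, hc, hwi⟩ := hw i
  obtain ⟨c', hc', hwσi⟩ := hw (σ i)
  refine ⟨c⁻¹ * c', mul_pos (inv_pos.2 hc) hc', ?_⟩
  have h := congrArg (c⁻¹ • ·) (hA i)
  simp only [hwi, hwσi, mulVec_smul, smul_smul, inv_mul_cancel₀ hc.ne', one_smul] at h
  exact h

/-- For a non-decomposable cone there is a choice of generators w
(positive rescaling of v) for which every projective symmetry is realized exactly
by a finite-order element of GL(C); i.e. Lin_w(C) = Proj(C). -/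
theorem stmt_12 (n p : ℕ) (v : Fin p → (Fin n → ℝ)) (hv : GoodCone v)
    (hnd : ¬ Decomposable v) :
    ∃ w : Fin p → (Fin n → ℝ), (∀ i, ∃ c : ℝ, 0 < c ∧ w i = c • v i) ∧
      ∀ σ : Equiv.Perm (Fin p),
        ProjSym v σ ↔ ∃ A : Matrix (Fin n) (Fin n) ℝ, PreservesCone A v ∧
          (∃ m : ℕ, 0 < m ∧ A ^ m = 1) ∧ ∀ i, A *ᵥ w i = w (σ i) := by
  classical
  obtain ⟨hfull, -, hext, -⟩ := hv
  set N := projRepHom hfull (fun i => (hext i).1) hnd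
  have hN : ∀ σ, MapsRays (N σ) v ((projSymSubgroup v).subtype σ) :=
    fun σ => (projRep_spec σ.2).2.1
  have hw := averagedGenerators_eq_smul hN
  refine ⟨averagedGenerators (projSymSubgroup v).subtype N v, hw, fun σ => ⟨fun hσ => ?_, ?_⟩⟩
  · set g : projSymSubgroup v := ⟨σ, hσ⟩
    refine ⟨N g, (projRep_spec hσ).1, ⟨orderOf g, orderOf_pos g, ?_⟩,
      mulVec_averagedGenerators _ N v g⟩
    rw [← map_pow, pow_orderOf_eq_one, map_one]
  · rintro ⟨A, hA, -, hAw⟩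
    exact ⟨A, hA, MapsRays.of_mulVec_eq hw hAw⟩
end
end

section
/- Let C and C' be pointed full-dimensional polyhedral cones in ℝ^n generated by n+1 extreme rays each, with unique dependency coefficients having n_+ and n'_+ positive entries respectively (after all nonzero, up to overall sign choose n_+ ≤ n_−). Then C and C' are projectively equivalent if and only if {n_+, n_−} = {n'_+, n'_−}, assuming both are non-decomposable. -/
open Matrix

noncomputable section

variable {n p : ℕ}

/-! Since `n + 1` spanning vectors in an `n`-dimensional space have a one-dimensional space of
linear dependencies, a linear equivalence sending each `v i` to a positive multiple of `w (σ i)`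
transports `α` to a dependency of `w`, hence to a nonzero multiple of `β`; this preserves the
unordered pair of sign counts. Conversely, if the pairs agree, then after possibly negating `α`
some permutation `σ` matches the signs of `α` with those of `β ∘ σ`. The rescaled families
`α i • v i` and `β (σ i) • w (σ i)` both have the all-ones vector as their only dependency, so
their linear combination maps have the same kernel and induce a linear equivalence sending one
family to the other. -/

open Finset

theorem LinearMap.exists_linearEquiv_apply_eq_of_ker_eq {R M V W : Type*} [Ring R]
    [AddCommGroup M] [Module R M] [AddCommGroup V] [Module R V] [AddCommGroup W] [Module R W]
    {f : M →ₗ[R] V} {g : M →ₗ[R] W}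
    (hf : Function.Surjective f) (hg : Function.Surjective g) (h : ker f = ker g) :
    ∃ A : V ≃ₗ[R] W, ∀ x, A (f x) = g x :=
  ⟨(f.quotKerEquivOfSurjective hf).symm ≪≫ₗ Submodule.quotEquivOfEq _ _ h ≪≫ₗ
      g.quotKerEquivOfSurjective hg,
    fun x => by simp⟩

section LinearAlgebra

variable {K V W ι : Type*} [Field K] [AddCommGroup V] [Module K V] [AddCommGroup W] [Module K W]

theorem Submodule.span_range_smul_eq_top {v : ι → V} (hv : span K (Set.range v) = ⊤)
    {α : ι → K} (hα : ∀ i, α i ≠ 0) : span K (Set.range fun i => α i • v i) = ⊤ := by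
  rw [eq_top_iff, ← hv, span_le]
  rintro _ ⟨i, rfl⟩
  rw [← inv_smul_smul₀ (hα i) (v i)]
  exact smul_mem _ _ (subset_span ⟨i, rfl⟩)

variable [Fintype ι]

theorem ker_fintypeLinearCombination_eq_span_singleton [FiniteDimensional K V] {v : ι → V}
    (hv : Submodule.span K (Set.range v) = ⊤) (hcard : Fintype.card ι = Module.finrank K V + 1)
    {α : ι → K} (hα : ∑ i, α i • v i = 0) (hα0 : α ≠ 0) :
    LinearMap.ker (Fintype.linearCombination K v) = K ∙ α := by
  have hker : Module.finrank K (LinearMap.ker (Fintype.linearCombination K v)) = 1 := by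
    have := (Fintype.linearCombination K v).finrank_range_add_finrank_ker
    rw [Fintype.range_linearCombination, hv, finrank_top, Module.finrank_fintype_fun_eq_card,
      hcard] at this
    omega
  exact eq_span_singleton_of_mem_of_finrank_eq_one hker
    (by rwa [LinearMap.mem_ker, Fintype.linearCombination_apply]) hα0

theorem exists_linearEquiv_apply_eq_div_smul [FiniteDimensional K V] [FiniteDimensional K W]
    {v : ι → V} {w : ι → W} (hv : Submodule.span K (Set.range v) = ⊤)
    (hw : Submodule.span K (Set.range w) = ⊤) (hV : Fintype.card ι = Module.finrank K V + 1)
    (hW : Fintype.card ι = Module.finrank K W + 1) {α β : ι → K}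
    (hα : ∑ i, α i • v i = 0) (hβ : ∑ i, β i • w i = 0)
    (hα0 : ∀ i, α i ≠ 0) (hβ0 : ∀ i, β i ≠ 0) :
    ∃ A : V ≃ₗ[K] W, ∀ i, A (v i) = (β i / α i) • w i := by
  classical
  have : Nonempty ι := Fintype.card_pos_iff.mp (by omega)
  set x := fun i => α i • v i
  set y := fun i => β i • w i
  have hker : LinearMap.ker (Fintype.linearCombination K x) =
      LinearMap.ker (Fintype.linearCombination K y) := by
    rw [ker_fintypeLinearCombination_eq_span_singleton (Submodule.span_range_smul_eq_top hv hα0)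
        hV (α := 1) (by simpa using hα) one_ne_zero,
      ker_fintypeLinearCombination_eq_span_singleton (Submodule.span_range_smul_eq_top hw hβ0)
        hW (α := 1) (by simpa using hβ) one_ne_zero]
  obtain ⟨A, hA⟩ := LinearMap.exists_linearEquiv_apply_eq_of_ker_eq
    ((span_range_eq_top_iff_surjective_fintypeLinearCombination K x).mp
      (Submodule.span_range_smul_eq_top hv hα0))
    ((span_range_eq_top_iff_surjective_fintypeLinearCombination K y).mp
      (Submodule.span_range_smul_eq_top hw hβ0)) hker
  refine ⟨A, fun i => ?_⟩
  have hAx : A (x i) = y i := by simpa using hA (Pi.single i 1)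
  rw [← inv_smul_smul₀ (hα0 i) (v i), map_smul, hAx, smul_smul, div_eq_inv_mul]

end LinearAlgebra

theorem Equiv.Perm.exists_iff_apply_of_card_eq {ι : Type*} [Fintype ι] {p q : ι → Prop}
    [DecidablePred p] [DecidablePred q]
    (h : Fintype.card {i // p i} = Fintype.card {i // q i}) :
    ∃ σ : Equiv.Perm ι, ∀ i, p i ↔ q (σ i) := by
  have hc : Fintype.card {i // ¬p i} = Fintype.card {i // ¬q i} := by
    rw [Fintype.card_subtype_compl, Fintype.card_subtype_compl, h]
  refine ⟨Equiv.subtypeCongr (Fintype.equivOfCardEq h) (Fintype.equivOfCardEq hc), fun i => ?_⟩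
  by_cases hi : p i
  · simpa [Equiv.subtypeCongr, hi] using (Fintype.equivOfCardEq h ⟨i, hi⟩).prop
  · simpa [Equiv.subtypeCongr, hi] using (Fintype.equivOfCardEq hc ⟨i, hi⟩).prop

section Signs

variable {K ι κ : Type*} [Field K] [LinearOrder K] [Fintype ι] [Fintype κ]

def signCounts (α : ι → K) : Finset ℕ :=
  {(univ.filter fun i => 0 < α i).card, (univ.filter fun i => α i < 0).card}

theorem signCounts_congr {α : ι → K} {β : κ → K} (σ : ι ≃ κ)
    (h : ∀ i, SignType.sign (α i) = SignType.sign (β (σ i))) : signCounts α = signCounts β := by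
  unfold signCounts
  congr 2 <;> refine card_equiv σ fun i => ?_ <;>
    simp only [mem_filter, mem_univ, true_and, ← sign_eq_one_iff, ← sign_eq_neg_one_iff, h]

variable [IsStrictOrderedRing K]

theorem signCounts_neg (α : ι → K) : signCounts (-α) = signCounts α := by
  simp only [signCounts, Pi.neg_apply, neg_pos, neg_lt_zero, pair_comm]

theorem signCounts_smul {c : K} (hc : c ≠ 0) (α : ι → K) : signCounts (c • α) = signCounts α := by
  rcases hc.lt_or_gt with hc | hc
  · rw [← signCounts_neg α]
    exact signCounts_congr (Equiv.refl ι) fun i => by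
      simp [sign_mul, sign_neg hc, Left.sign_neg]
  · exact signCounts_congr (Equiv.refl ι) fun i => by simp [sign_mul, sign_pos hc]

theorem div_pos_of_pos_iff {a b : K} (ha : a ≠ 0) (hb : b ≠ 0) (h : 0 < a ↔ 0 < b) :
    0 < b / a := by
  rcases ha.lt_or_gt with ha | ha
  · exact div_pos_of_neg_of_neg (hb.lt_or_gt.resolve_right (h.not.mp ha.not_gt)) ha
  · exact div_pos (h.mp ha) ha

theorem exists_perm_of_signCounts_eq {α β : ι → K} (h : signCounts α = signCounts β) :
    ∃ c : K, c ≠ 0 ∧ ∃ σ : Equiv.Perm ι, ∀ i, 0 < c * α i ↔ 0 < β (σ i) := by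
  have hmem : (univ.filter fun i => 0 < β i).card ∈ signCounts α := h ▸ mem_insert_self _ _
  obtain ⟨c, hc, hcard⟩ : ∃ c : K, c ≠ 0 ∧
      (univ.filter fun i => 0 < c * α i).card = (univ.filter fun i => 0 < β i).card := by
    rcases mem_insert.mp hmem with hpos | hneg
    · exact ⟨1, one_ne_zero, by simpa using hpos.symm⟩
    · exact ⟨-1, by norm_num, by simpa using (mem_singleton.mp hneg).symm⟩
  exact ⟨c, hc, Equiv.Perm.exists_iff_apply_of_card_eq
    (p := fun i => 0 < c * α i) (q := fun i => 0 < β i) (by simpa [Fintype.card_subtype])⟩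

end Signs

section ProjEquiv

variable {v w : Fin (n + 1) → (Fin n → ℝ)} {α β : Fin (n + 1) → ℝ}

theorem card_fin_succ_eq_finrank_add_one :
    Fintype.card (Fin (n + 1)) = Module.finrank ℝ (Fin n → ℝ) + 1 := by
  simp

theorem ProjEquiv.signCounts_eq (h : ProjEquiv v w) (hw : FullDim w)
    (hα : ∑ i, α i • v i = 0) (hβ : ∑ i, β i • w i = 0) (hα0 : α ≠ 0) (hβ0 : β ≠ 0) :
    signCounts α = signCounts β := by
  obtain ⟨A, σ, lam, hlam, hA⟩ := h
  set γ : Fin (n + 1) → ℝ := fun j => α (σ.symm j) * lam (σ.symm j)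
  have hγσ : ∀ i, γ (σ i) = α i * lam i := fun i => by simp [γ]
  have hγ : ∑ j, γ j • w j = 0 := by
    rw [← Equiv.sum_comp σ]
    simpa [hγσ, map_sum, hA, smul_smul] using congrArg A hα
  obtain ⟨c, hc⟩ : ∃ c : ℝ, c • β = γ := by
    rw [← Submodule.mem_span_singleton,
      ← ker_fintypeLinearCombination_eq_span_singleton hw card_fin_succ_eq_finrank_add_one hβ hβ0,
      LinearMap.mem_ker, Fintype.linearCombination_apply, hγ]
  have hc0 : c ≠ 0 := by
    rintro rfl
    obtain ⟨i, hi⟩ := Function.ne_iff.mp hα0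
    exact mul_ne_zero hi (hlam i).ne' (by rw [← hγσ, ← hc, zero_smul, Pi.zero_apply])
  calc signCounts α = signCounts γ :=
        signCounts_congr σ fun i => by rw [hγσ, sign_mul, sign_pos (hlam i), mul_one]
    _ = signCounts β := by rw [← hc, signCounts_smul hc0]

theorem projEquiv_of_signCounts_eq (hv : FullDim v) (hw : FullDim w)
    (hα : ∑ i, α i • v i = 0) (hβ : ∑ i, β i • w i = 0)
    (hα0 : ∀ i, α i ≠ 0) (hβ0 : ∀ i, β i ≠ 0) (h : signCounts α = signCounts β) :
    ProjEquiv v w := by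
  obtain ⟨c, hc, σ, hσ⟩ := exists_perm_of_signCounts_eq h
  obtain ⟨A, hA⟩ := exists_linearEquiv_apply_eq_div_smul (α := c • α) (β := β ∘ σ) (w := w ∘ σ)
    hv (by rwa [Set.range_comp, σ.range_eq_univ, Set.image_univ]) card_fin_succ_eq_finrank_add_one
    card_fin_succ_eq_finrank_add_one
    (by simp [mul_smul, ← smul_sum, hα]) (by simpa using Equiv.sum_comp σ (fun j => β j • w j) ▸ hβ)
    (fun i => mul_ne_zero hc (hα0 i)) (fun i => hβ0 (σ i))
  exact ⟨A, σ, _, fun i => div_pos_of_pos_iff (mul_ne_zero hc (hα0 i)) (hβ0 (σ i)) (hσ i), hA⟩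

end ProjEquiv

theorem stmt_14_general (n : ℕ) (v w : Fin (n + 1) → (Fin n → ℝ))
    (hv : GoodCone v) (hw : GoodCone w)
    (α β : Fin (n + 1) → ℝ)
    (hα : ∑ i, α i • v i = 0) (hβ : ∑ i, β i • w i = 0)
    (hα0 : ∀ i, α i ≠ 0) (hβ0 : ∀ i, β i ≠ 0) :
    ProjEquiv v w ↔
      ({(Finset.univ.filter fun i => 0 < α i).card,
        (Finset.univ.filter fun i => α i < 0).card} : Finset ℕ) =
      {(Finset.univ.filter fun i => 0 < β i).card,
        (Finset.univ.filter fun i => β i < 0).card} :=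
  ⟨fun h => h.signCounts_eq hw.1 hα hβ (fun h0 => hα0 0 (congrFun h0 0))
      (fun h0 => hβ0 0 (congrFun h0 0)),
    projEquiv_of_signCounts_eq hv.1 hw.1 hα hβ hα0 hβ0⟩

/-- Two non-decomposable cones with n+1 extreme rays are projectively
equivalent iff the unordered pairs {n₊, n₋} of signs of their unique dependency
coefficients agree. -/
theorem stmt_14 (n : ℕ) (hn : 3 ≤ n) (v w : Fin (n + 1) → (Fin n → ℝ))
    (hv : GoodCone v) (hw : GoodCone w)
    (hndv : ¬ Decomposable v) (hndw : ¬ Decomposable w)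
    (α β : Fin (n + 1) → ℝ)
    (hα : ∑ i, α i • v i = 0) (hβ : ∑ i, β i • w i = 0)
    (hα0 : ∀ i, α i ≠ 0) (hβ0 : ∀ i, β i ≠ 0) :
    ProjEquiv v w ↔
      ({(Finset.univ.filter fun i => 0 < α i).card,
        (Finset.univ.filter fun i => α i < 0).card} : Finset ℕ) =
      {(Finset.univ.filter fun i => 0 < β i).card,
        (Finset.univ.filter fun i => β i < 0).card} :=
  stmt_14_general n v w hv hw α β hα hβ hα0 hβ0
end
end

section
/- Let C be a pointed full-dimensional polyhedral cone in ℝ^n with extreme rays generated by v₁,…,v_p, and for positive multipliers α = (α₁,…,α_p) let Lin_{αv}(C) denote the group of permutations σ for which some A ∈ GL_n(ℝ) satisfies A(α_i v_i) = α_{σ(i)} v_{σ(i)}. If Lin_{αv}(C) acts transitively on {1,…,p}, then Lin_{αv}(C) = Proj(C). -/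
open Matrix

noncomputable section

variable {n p : ℕ}

/-!
Put `w i = α i • v i` and encode an invertible map `A` with `A (w i) = exp (x i) • w (σ i)` by
the pair `(σ, x)`. The log-scalings `x` that occur with `σ = 1` form a linear subspace `D` of
`ℝ^p`: a real power of a map acting diagonally, with positive eigenvalues, on a spanning family
is a polynomial in that map. `D` contains the constants and is stable under the permutations in
`Proj(C)`. Choosing one `x_σ` for every `σ ∈ Proj(C)` gives a cocycle modulo `D`, and averaging
over the finite group `Proj(C)` makes it a coboundary: `x_σ ≡ β - β ∘ σ`. For `σ` in
`Lin_{αv}(C)` we have `x_σ ∈ D`, so `β` is invariant modulo `D`; averaging over the transitive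
group `Lin_{αv}(C)` then shows that `β` is constant modulo `D`, that is `β ∈ D`. Hence every
`x_σ` lies in `D`, which means that `σ` is realized with trivial scalings. Conversely, a linear
map sending each generator to a positive multiple of a generator maps `C` onto itself.
-/

open Equiv Set Submodule

section Averaging

variable {ι : Type*} [Fintype ι] (F : Submodule ℝ (ι → ℝ))

-- The first cohomology of a finite group with real coefficients vanishes: average the cocycle.
theorem exists_forall_add_comp_sub_mem (G : Subgroup (Perm ι)) (c : Perm ι → ι → ℝ)
    (hc : ∀ ρ ∈ G, ∀ τ ∈ G, c (ρ * τ) - (c τ + c ρ ∘ τ) ∈ F) :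
    ∃ β : ι → ℝ, ∀ τ ∈ G, c τ + β ∘ τ - β ∈ F := by
  classical
  set S : ι → ℝ := ∑ ρ : G, c ρ
  set N : ℝ := ((Fintype.card G : ℕ) : ℝ)
  refine ⟨N⁻¹ • S, fun τ hτ => ?_⟩
  have hsum : ∑ ρ : G, (c (ρ * τ) - (c τ + c ρ ∘ τ)) ∈ F :=
    F.sum_mem fun ρ _ => hc ρ ρ.2 τ hτ
  have hshift : ∑ ρ : G, c (ρ * τ) = S :=
    Fintype.sum_equiv (Equiv.mulRight ⟨τ, hτ⟩) _ _ fun _ => rfl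
  have hN : N ≠ 0 := Nat.cast_ne_zero.2 Fintype.card_ne_zero
  convert F.smul_mem (-N⁻¹) hsum using 1
  ext i
  simp only [Finset.sum_sub_distrib, Finset.sum_add_distrib, hshift, Finset.sum_const,
    Finset.card_univ, Pi.smul_apply, Pi.sub_apply, Pi.add_apply, Function.comp_apply,
    Finset.sum_apply, smul_eq_mul, nsmul_eq_mul, Pi.mul_apply, Pi.natCast_apply, S, N]
  field_simp
  ring

theorem mem_of_forall_comp_sub_mem (hconst : ∀ a : ℝ, (fun _ => a) ∈ F) (H : Subgroup (Perm ι))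
    (htrans : ∀ i j, ∃ τ ∈ H, τ i = j) {β : ι → ℝ} (hβ : ∀ τ ∈ H, β ∘ τ - β ∈ F) : β ∈ F := by
  classical
  rcases isEmpty_or_nonempty ι with _ | ⟨⟨i₀⟩⟩
  · exact Subsingleton.elim 0 β ▸ F.zero_mem
  have hsum : ∑ τ : H, (β ∘ τ - β) ∈ F := F.sum_mem fun τ _ => hβ τ τ.2
  have horbit : ∀ i, ∑ τ : H, β ((τ : Perm ι) i) = ∑ τ : H, β ((τ : Perm ι) i₀) := by
    intro i
    obtain ⟨τ₀, hτ₀, rfl⟩ := htrans i₀ i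
    exact Fintype.sum_equiv (Equiv.mulRight ⟨τ₀, hτ₀⟩) _ _ fun _ => rfl
  have hN : (Fintype.card H : ℝ) ≠ 0 := Nat.cast_ne_zero.2 Fintype.card_ne_zero
  convert F.smul_mem (Fintype.card H : ℝ)⁻¹
    (F.sub_mem (hconst (∑ τ : H, β ((τ : Perm ι) i₀))) hsum) using 1
  ext i
  simp only [Finset.sum_sub_distrib, ← horbit i, Finset.sum_const, Finset.card_univ,
    Pi.smul_apply, Pi.sub_apply, Function.comp_apply, Finset.sum_apply, smul_eq_mul,
    nsmul_eq_mul, Pi.mul_apply, Pi.natCast_apply]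
  field_simp
  ring

end Averaging

section Realization

variable {ι E : Type*} [AddCommGroup E] [Module ℝ E]

-- The scalings are recorded by their logarithms, so they are positive and compose additively.
def Realizes (w : ι → E) (σ : Perm ι) (x : ι → ℝ) : Prop :=
  ∃ e : E ≃ₗ[ℝ] E, ∀ i, e (w i) = Real.exp (x i) • w (σ i)

theorem LinearEquiv.symm_apply_eq_inv_smul {e : E ≃ₗ[ℝ] E} {u u' : E} {c : ℝ} (hc : c ≠ 0)
    (h : e u = c • u') : e.symm u' = c⁻¹ • u :=
  e.symm_apply_eq.2 (by rw [map_smul, h, inv_smul_smul₀ hc])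

variable {w : ι → E} {σ τ : Perm ι} {x y : ι → ℝ}

theorem realizes_one : Realizes w 1 0 :=
  ⟨LinearEquiv.refl ℝ E, fun i => by simp⟩

theorem Realizes.mul (hσ : Realizes w σ x) (hτ : Realizes w τ y) :
    Realizes w (σ * τ) (y + x ∘ τ) := by
  obtain ⟨e, he⟩ := hσ
  obtain ⟨f, hf⟩ := hτ
  exact ⟨f.trans e, fun i => by simp [hf, he, smul_smul, Real.exp_add]⟩

theorem Realizes.inv (hσ : Realizes w σ x) : Realizes w σ⁻¹ (-(x ∘ ⇑σ⁻¹)) := by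
  obtain ⟨e, he⟩ := hσ
  refine ⟨e.symm, fun j => ?_⟩
  simpa [Real.exp_neg] using
    LinearEquiv.symm_apply_eq_inv_smul (Real.exp_pos _).ne' (he (σ⁻¹ j))

theorem Realizes.smul (hσ : Realizes w σ x) {α : ι → ℝ} (hα : ∀ i, 0 < α i) :
    Realizes (fun i => α i • w i) σ (fun i => x i + Real.log (α i) - Real.log (α (σ i))) := by
  obtain ⟨e, he⟩ := hσ
  refine ⟨e, fun i => ?_⟩
  rw [map_smul, he, Real.exp_sub, Real.exp_add, Real.exp_log (hα i), Real.exp_log (hα (σ i)),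
    smul_smul, smul_smul]
  field_simp [(hα (σ i)).ne']

def projSubgroup (w : ι → E) : Subgroup (Perm ι) where
  carrier := {σ | ∃ x, Realizes w σ x}
  mul_mem' := fun ⟨_, hx⟩ ⟨_, hy⟩ => ⟨_, hx.mul hy⟩
  one_mem' := ⟨0, realizes_one⟩
  inv_mem' := fun ⟨_, hx⟩ => ⟨_, hx.inv⟩

def linSubgroup (w : ι → E) : Subgroup (Perm ι) where
  carrier := {σ | Realizes w σ 0}
  mul_mem' hσ hτ := by simpa using hσ.mul hτ
  one_mem' := realizes_one
  inv_mem' hσ := by simpa using hσ.inv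

theorem mem_linSubgroup : σ ∈ linSubgroup w ↔ Realizes w σ 0 := Iff.rfl

theorem linSubgroup_le_projSubgroup : linSubgroup w ≤ projSubgroup w :=
  fun _ hσ => ⟨0, hσ⟩

theorem mem_projSubgroup_iff :
    σ ∈ projSubgroup w ↔ ∃ e : E ≃ₗ[ℝ] E, ∀ i, ∃ c : ℝ, 0 < c ∧ e (w i) = c • w (σ i) := by
  constructor
  · rintro ⟨x, e, he⟩
    exact ⟨e, fun i => ⟨Real.exp (x i), Real.exp_pos _, he i⟩⟩
  · rintro ⟨e, he⟩
    choose c hc he using he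
    exact ⟨fun i => Real.log (c i), e, fun i => by rw [Real.exp_log (hc i), he]⟩

theorem projSubgroup_smul {α : ι → ℝ} (hα : ∀ i, 0 < α i) :
    projSubgroup (fun i => α i • w i) = projSubgroup w := by
  refine le_antisymm (fun _ ⟨_, hσ⟩ => ?_) fun _ ⟨_, hσ⟩ => ⟨_, hσ.smul hα⟩
  have hα' : ∀ i, 0 < (α i)⁻¹ := fun i => inv_pos.2 (hα i)
  have hw : (fun i => (α i)⁻¹ • α i • w i) = w := funext fun i => inv_smul_smul₀ (hα i).ne' _
  exact ⟨_, hw ▸ hσ.smul hα'⟩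

theorem realizes_of_linearMap [FiniteDimensional ℝ E] (hw : span ℝ (range w) = ⊤)
    (f : Module.End ℝ E) (hf : ∀ i, f (w i) = Real.exp (x i) • w (σ i)) : Realizes w σ x := by
  have hsurj : Function.Surjective f := by
    rw [← LinearMap.range_eq_top, eq_top_iff, ← hw, span_le]
    rintro _ ⟨j, rfl⟩
    refine ⟨Real.exp (-x (σ.symm j)) • w (σ.symm j), ?_⟩
    rw [map_smul, hf, smul_smul, ← Real.exp_add, neg_add_cancel, Real.exp_zero, one_smul,
      apply_symm_apply]
  exact ⟨.ofBijective f ⟨LinearMap.injective_iff_surjective.2 hsurj, hsurj⟩, hf⟩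

end Realization

section Diagonal

variable {ι E : Type*} [Fintype ι] [AddCommGroup E] [Module ℝ E]

def diagonalLogScalings (w : ι → E) : Submodule ℝ (ι → ℝ) where
  carrier := {x | ∃ f : Module.End ℝ E, ∀ i, f (w i) = Real.exp (x i) • w i}
  add_mem' := by
    rintro x y ⟨f, hf⟩ ⟨g, hg⟩
    exact ⟨f * g, fun i => by simp [hf, hg, smul_smul, Real.exp_add, mul_comm]⟩
  zero_mem' := ⟨1, fun i => by simp⟩
  smul_mem' := by
    classical
    -- `f ^ t` is a polynomial in `f`: interpolate `μ ↦ μ ^ t` on the eigenvalues.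
    rintro t x ⟨f, hf⟩
    let q := Lagrange.interpolate (Finset.univ.image fun i => Real.exp (x i)) id
      fun μ => Real.exp (t * Real.log μ)
    refine ⟨Polynomial.aeval f q, fun i => ?_⟩
    have hq : q.eval (Real.exp (x i)) = Real.exp (t * x i) := by
      simpa only [id, Real.log_exp] using
        Lagrange.eval_interpolate_at_node (fun μ => Real.exp (t * Real.log μ)) (Set.injOn_id _)
          (Finset.mem_image_of_mem (fun i => Real.exp (x i)) (Finset.mem_univ i))
    rw [Module.End.aeval_apply_of_mem_apply_eq_smul (hf i), hq]
    rfl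

variable {w : ι → E} {σ : Perm ι} {x y : ι → ℝ}

theorem const_mem_diagonalLogScalings (a : ℝ) : (fun _ => a) ∈ diagonalLogScalings w :=
  ⟨Real.exp a • 1, fun i => by simp⟩

theorem Realizes.sub_mem_diagonalLogScalings (hx : Realizes w σ x) (hy : Realizes w σ y) :
    x - y ∈ diagonalLogScalings w := by
  obtain ⟨e, he⟩ := hx
  obtain ⟨f, hf⟩ := hy
  refine ⟨(e.trans f.symm).toLinearMap, fun i => ?_⟩
  simp [he, LinearEquiv.symm_apply_eq_inv_smul (Real.exp_pos _).ne' (hf i), smul_smul,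
    Real.exp_sub, div_eq_mul_inv]

theorem Realizes.comp_mem_diagonalLogScalings (hσ : Realizes w σ y)
    (hx : x ∈ diagonalLogScalings w) : x ∘ σ ∈ diagonalLogScalings w := by
  obtain ⟨e, he⟩ := hσ
  obtain ⟨f, hf⟩ := hx
  refine ⟨e.symm.toLinearMap ∘ₗ f ∘ₗ e.toLinearMap, fun i => ?_⟩
  simp [he, hf, LinearEquiv.symm_apply_eq_inv_smul (Real.exp_pos _).ne' (he i), smul_smul]
  rw [mul_right_comm, mul_inv_cancel₀ (Real.exp_pos _).ne', one_mul]

theorem Realizes.of_sub_mem_diagonalLogScalings [FiniteDimensional ℝ E]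
    (hw : span ℝ (range w) = ⊤) (hx : Realizes w σ x) (hxy : x - y ∈ diagonalLogScalings w) :
    Realizes w σ y := by
  obtain ⟨e, he⟩ := hx
  obtain ⟨f, hf⟩ := neg_mem hxy
  refine realizes_of_linearMap hw (e.toLinearMap ∘ₗ f) fun i => ?_
  simp [hf, he, smul_smul, ← Real.exp_add]

variable [FiniteDimensional ℝ E]

theorem projSubgroup_le_linSubgroup (hw : span ℝ (range w) = ⊤)
    (htrans : ∀ i j, ∃ τ ∈ linSubgroup w, τ i = j) : projSubgroup w ≤ linSubgroup w := by
  choose! c hc using fun σ (hσ : σ ∈ projSubgroup w) => hσ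
  set D := diagonalLogScalings w
  obtain ⟨β, hβ⟩ := exists_forall_add_comp_sub_mem D (projSubgroup w) c fun ρ hρ τ hτ =>
    (hc _ (mul_mem hρ hτ)).sub_mem_diagonalLogScalings ((hc ρ hρ).mul (hc τ hτ))
  have hβD : β ∈ D := by
    refine mem_of_forall_comp_sub_mem D const_mem_diagonalLogScalings _ htrans fun τ hτ => ?_
    have hcτ : c τ ∈ D := by
      simpa using (hc τ (linSubgroup_le_projSubgroup hτ)).sub_mem_diagonalLogScalings hτ
    convert D.sub_mem (hβ τ (linSubgroup_le_projSubgroup hτ)) hcτ using 1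
    abel
  intro σ hσ
  have hcσ : c σ - 0 ∈ D := by
    convert D.add_mem (D.sub_mem (hβ σ hσ) ((hc σ hσ).comp_mem_diagonalLogScalings hβD)) hβD
      using 1
    abel
  exact (hc σ hσ).of_sub_mem_diagonalLogScalings hw hcσ

end Diagonal

theorem span_range_smul_eq {K M ι : Type*} [Field K] [AddCommGroup M] [Module K M]
    {w : ι → M} {α : ι → K} (hα : ∀ i, α i ≠ 0) :
    span K (range fun i => α i • w i) = span K (range w) := by
  refine le_antisymm (span_le.2 ?_) (span_le.2 ?_) <;> rintro _ ⟨i, rfl⟩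
  · exact smul_mem _ _ (subset_span ⟨i, rfl⟩)
  · rw [← inv_smul_smul₀ (hα i) (w i)]
    exact smul_mem _ _ (subset_span ⟨i, rfl⟩)

theorem Matrix.exists_isUnit_det_iff_exists_linearEquiv {m R : Type*} [Fintype m]
    [DecidableEq m] [CommRing R] (P : ((m → R) → m → R) → Prop) :
    (∃ A : Matrix m m R, IsUnit A.det ∧ P (A *ᵥ ·)) ↔ ∃ e : (m → R) ≃ₗ[R] m → R, P e := by
  constructor
  · rintro ⟨A, hA, hP⟩
    exact ⟨A.toLinearEquiv' (A.invertibleOfIsUnitDet hA), hP⟩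
  · rintro ⟨e, hP⟩
    refine ⟨LinearMap.toMatrix' e, by simpa using e.isUnit_det', ?_⟩
    convert hP using 2 with x
    exact LinearMap.toMatrix'_mulVec _ x

theorem exists_matrix_iff_mem_linSubgroup {m : Type*} [Fintype m] [DecidableEq m]
    {ι : Type*} {w : ι → m → ℝ} {σ : Perm ι} :
    (∃ A : Matrix m m ℝ, IsUnit A.det ∧ ∀ i, A *ᵥ w i = w (σ i)) ↔ σ ∈ linSubgroup w :=
  (Matrix.exists_isUnit_det_iff_exists_linearEquiv fun f => ∀ i, f (w i) = w (σ i)).trans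
    (by simp [mem_linSubgroup, Realizes])

theorem mapsTo_coneOf {v : Fin p → Fin n → ℝ} {f : (Fin n → ℝ) →ₗ[ℝ] Fin n → ℝ}
    {σ : Perm (Fin p)} {c : Fin p → ℝ} (hc : ∀ i, 0 ≤ c i) (hf : ∀ i, f (v i) = c i • v (σ i)) :
    MapsTo f (coneOf v) (coneOf v) := by
  rintro _ ⟨a, ha, rfl⟩
  refine ⟨fun j => a (σ.symm j) * c (σ.symm j), fun j => mul_nonneg (ha _) (hc _), ?_⟩
  simp only [map_sum, map_smul, hf, smul_smul]
  rw [← Equiv.sum_comp σ (fun j => (a (σ.symm j) * c (σ.symm j)) • v j)]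
  simp only [symm_apply_apply]

theorem image_coneOf_eq {v : Fin p → Fin n → ℝ} {e : (Fin n → ℝ) ≃ₗ[ℝ] Fin n → ℝ}
    {σ : Perm (Fin p)} {c : Fin p → ℝ} (hc : ∀ i, 0 < c i) (he : ∀ i, e (v i) = c i • v (σ i)) :
    e '' coneOf v = coneOf v := by
  refine (mapsTo_coneOf (f := e.toLinearMap) (fun i => (hc i).le) he).image_subset.antisymm
    fun y hy => ⟨e.symm y, ?_, e.apply_symm_apply y⟩
  refine mapsTo_coneOf (f := e.symm.toLinearMap) (σ := σ.symm)
    (c := fun j => (c (σ.symm j))⁻¹) (fun j => (inv_pos.2 (hc _)).le) (fun j => ?_) hy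
  simpa using LinearEquiv.symm_apply_eq_inv_smul (hc _).ne' (he (σ.symm j))

theorem projSym_iff_mem_projSubgroup {v : Fin p → Fin n → ℝ} {σ : Perm (Fin p)} :
    ProjSym v σ ↔ σ ∈ projSubgroup v := by
  simp only [ProjSym, PreservesCone, MapsRays, and_assoc]
  refine (Matrix.exists_isUnit_det_iff_exists_linearEquiv fun f =>
    f '' coneOf v = coneOf v ∧ ∀ i, ∃ c, 0 < c ∧ f (v i) = c • v (σ i)).trans ?_
  rw [mem_projSubgroup_iff]
  refine exists_congr fun e => ⟨And.right, fun he => ⟨?_, he⟩⟩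
  choose c hc he using he
  exact image_coneOf_eq hc he

/-- If the linear symmetry group of the rescaled generators αᵢvᵢ acts
transitively on {1,…,p}, then it equals the projective symmetry group. -/
theorem stmt_16 (n p : ℕ) (v : Fin p → (Fin n → ℝ)) (hv : GoodCone v)
    (α : Fin p → ℝ) (hα : ∀ i, 0 < α i)
    (htrans : ∀ i j : Fin p, ∃ σ : Equiv.Perm (Fin p),
      (∃ A : Matrix (Fin n) (Fin n) ℝ, IsUnit A.det ∧
        ∀ l, A *ᵥ (α l • v l) = α (σ l) • v (σ l)) ∧ σ i = j) :
    ∀ σ : Equiv.Perm (Fin p),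
      (∃ A : Matrix (Fin n) (Fin n) ℝ, IsUnit A.det ∧
        ∀ l, A *ᵥ (α l • v l) = α (σ l) • v (σ l)) ↔ ProjSym v σ := by
  intro σ
  set w : Fin p → Fin n → ℝ := fun l => α l • v l
  have hw : span ℝ (range w) = ⊤ := (span_range_smul_eq fun i => (hα i).ne').trans hv.1
  have hle : projSubgroup w ≤ linSubgroup w := projSubgroup_le_linSubgroup hw fun i j =>
    (htrans i j).imp fun τ h => ⟨exists_matrix_iff_mem_linSubgroup.1 h.1, h.2⟩
  rw [projSym_iff_mem_projSubgroup, ← projSubgroup_smul hα]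
  exact exists_matrix_iff_mem_linSubgroup.trans
    ⟨fun h => linSubgroup_le_projSubgroup h, fun h => hle h⟩
end
end
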